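/- Let R̄ be a commutative ring of characteristic p and S̄ a commutative R̄-algebra. Suppose (s(i))_{i∈I} is a family in W(S̄) which is a basis of W(S̄) as a W(R̄)-module, and suppose the family of zeroth coordinates (s(i)_0)_{i∈I} is R̄-linearly independent in S̄. Then S̄ is a relatively perfect R̄-algebra and (s(i)_0)_{i∈I} is an R̄-basis of S̄. -/

import Mathlib

open WittVector

/-- The `W(R)`-module structure on `W(S)` induced by the functorial map
`W(R) →+* W(S)` coming from the structure morphism `R → S`. -/
noncomputable instance wittModule (p : ℕ) [Fact p.Prime] (R S : Type*) [CommRing R]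
    [CommRing S] [Algebra R S] : Module (WittVector p R) (WittVector p S) :=
  Module.compHom (WittVector p S) (WittVector.map (algebraMap R S))

/-- `R` viewed as an `R`-module through the Frobenius endomorphism `a ↦ aᵖ`. -/
def FrobTwist (p : ℕ) (R : Type*) : Type _ := R

/-- The identity of `R`, viewed as a map `FrobTwist p R → R`. -/
def FrobTwist.val {p : ℕ} {R : Type*} (x : FrobTwist p R) : R := x

instance (p : ℕ) (R : Type*) [CommRing R] : AddCommGroup (FrobTwist p R) :=
  inferInstanceAs (AddCommGroup R)

noncomputable instance (p : ℕ) [Fact p.Prime] (R : Type*) [CommRing R] [CharP R p] :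
    Module R (FrobTwist p R) :=
  Module.compHom (R := R) R (frobenius R p)

/-- The relative Frobenius `S ⊗_{ψ, Frob_R} R → S`, `s ⊗ r ↦ s^p * ψ(r)`. -/
noncomputable def relativeFrobenius (p : ℕ) [Fact p.Prime] (R S : Type*) [CommRing R]
    [CommRing S] [Algebra R S] [CharP R p] [CharP S p] :
    TensorProduct R S (FrobTwist p R) →+ S :=
  TensorProduct.liftAddHom
    (AddMonoidHom.mk'
      (fun s => AddMonoidHom.mk' (fun r : FrobTwist p R => s ^ p * algebraMap R S r.val)
        (fun r r' => by
          show s ^ p * algebraMap R S (r.val + r'.val) = _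
          rw [map_add, mul_add]))
      (fun s t => by
        ext r
        show (s + t) ^ p * algebraMap R S r.val =
          s ^ p * algebraMap R S r.val + t ^ p * algebraMap R S r.val
        haveI : ExpChar S p := ExpChar.prime Fact.out
        rw [add_pow_char, add_mul]))
    (fun a s r => by
      show (a • s) ^ p * algebraMap R S r.val =
        s ^ p * algebraMap R S (frobenius R p a * r.val)
      rw [Algebra.smul_def, mul_pow, ← map_pow, map_mul, frobenius_def]
      ring)

/-!
Reducing modulo `V` sends a `W(R̄)`-basis `s` of `W(S̄)` to a generating family `(s i)₀` of `S̄`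
(Teichmüller lifts), and the `(s i)₀` are linearly independent exactly when
`V(W(S̄)) = V(W(R̄)) • W(S̄)`. By the projection formula `V(c • F y) = V c • y`, this equality
makes `F ∘ s` a `W(R̄)`-basis as well. Since `(F (s i))₀ = (s i)₀ ^ p` and the equality does not
depend on the basis, the `(s i)₀ ^ p` then form an `R̄`-basis of `S̄`; writing tensors in
`S̄ ⊗_{Frob} R̄` against the basis `(s i)₀`, this is the bijectivity of the relative Frobenius.
-/

section IdealSMulTop

variable {ι A M : Type*} [CommRing A] [AddCommGroup M] [Module A M]

theorem Module.Basis.mem_ideal_smul_top_iff (b : Module.Basis ι A M) (J : Ideal A) (x : M) :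
    x ∈ J • (⊤ : Submodule A M) ↔ ∀ i, b.repr x i ∈ J := by
  refine ⟨fun hx i => ?_, fun h => ?_⟩
  · refine Submodule.smul_induction_on (p := fun x => b.repr x i ∈ J) hx ?_ ?_
    · intro a ha y _
      simpa using J.mul_mem_right _ ha
    · intro y z hy hz
      simpa using J.add_mem hy hz
  · rw [← b.linearCombination_repr x, Finsupp.linearCombination_apply]
    exact Submodule.sum_mem _ fun i _ => Submodule.smul_mem_smul (h i) trivial

end IdealSMulTop

namespace WittVector

variable {p : ℕ} [Fact p.Prime] {R S : Type*} [CommRing R] [CommRing S] [Algebra R S]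

variable (p R) in
/-- The ideal `V(W(R))`, presented as the kernel of `x ↦ x₀`. -/
noncomputable abbrev verschiebungIdeal : Ideal (WittVector p R) :=
  RingHom.ker (constantCoeff (p := p) (R := R))

theorem zero_shift (n : ℕ) : (0 : WittVector p R).shift n = 0 := by
  ext k
  rw [shift_coeff, zero_coeff, zero_coeff]

theorem verschiebung_shift_one {x : WittVector p R} (hx : x.coeff 0 = 0) :
    verschiebung (x.shift 1) = x := by
  rw [verschiebung_shift x 0 (by simpa using hx)]
  ext n
  rw [shift_coeff, zero_add]

theorem wittModule_smul_def (a : WittVector p R) (x : WittVector p S) :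
    a • x = map (algebraMap R S) a * x := rfl

theorem coeff_zero_smul (a : WittVector p R) (x : WittVector p S) :
    (a • x).coeff 0 = a.coeff 0 • x.coeff 0 := by
  rw [wittModule_smul_def, mul_coeff_zero, map_coeff, Algebra.smul_def]

theorem verschiebung_smul_frobenius (c : WittVector p R) (y : WittVector p S) :
    verschiebung (c • frobenius y) = verschiebung c • y := by
  rw [wittModule_smul_def, wittModule_smul_def, verschiebung_mul_frobenius, map_verschiebung]

variable {I : Type*}

theorem coeff_zero_linearCombination (v : I → WittVector p S) (l : I →₀ WittVector p R) :
    (Finsupp.linearCombination (WittVector p R) v l).coeff 0 =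
      Finsupp.linearCombination R (fun i => (v i).coeff 0)
        (l.mapRange (coeff · 0) (zero_coeff p R 0)) := by
  rw [Finsupp.linearCombination_apply, Finsupp.linearCombination_apply,
    Finsupp.sum_mapRange_index (h := fun i (d : R) => d • (v i).coeff 0) fun _ => zero_smul R _,
    ← constantCoeff_apply, map_finsuppSum]
  exact Finsupp.sum_congr fun i _ => coeff_zero_smul _ _

theorem verschiebung_linearCombination_frobenius (v : I → WittVector p S)
    (l : I →₀ WittVector p R) :
    verschiebung (Finsupp.linearCombination (WittVector p R) (fun i => frobenius (v i)) l) =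
      Finsupp.linearCombination (WittVector p R) v (l.mapRange verschiebung (map_zero _)) := by
  rw [Finsupp.linearCombination_apply, Finsupp.linearCombination_apply,
    Finsupp.sum_mapRange_index (h := fun i c => c • v i) fun _ => zero_smul _ _, map_finsuppSum]
  exact Finsupp.sum_congr fun i _ => verschiebung_smul_frobenius _ _

theorem span_coeff_zero_eq_top {v : I → WittVector p S}
    (hv : Submodule.span (WittVector p R) (Set.range v) = ⊤) :
    Submodule.span R (Set.range fun i => (v i).coeff 0) = ⊤ := by
  rw [Submodule.eq_top_iff', ← Finsupp.range_linearCombination]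
  intro x
  obtain ⟨l, hl⟩ : teichmuller p x ∈
      LinearMap.range (Finsupp.linearCombination (WittVector p R) v) := by
    rw [Finsupp.range_linearCombination, hv]
    trivial
  exact ⟨_, by rw [← coeff_zero_linearCombination, hl, teichmuller_coeff_zero]⟩

theorem linearIndependent_coeff_zero_iff (b : Module.Basis I (WittVector p R) (WittVector p S)) :
    LinearIndependent R (fun i => (b i).coeff 0) ↔ ∀ x : WittVector p S, x.coeff 0 = 0 →
      x ∈ verschiebungIdeal p R • (⊤ : Submodule (WittVector p R) (WittVector p S)) := by
  constructor
  · intro hli x hx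
    have hrepr := linearIndependent_iff.mp hli _ <| by
      rw [← coeff_zero_linearCombination, b.linearCombination_repr, hx]
    refine (b.mem_ideal_smul_top_iff _ x).mpr fun i => ?_
    simpa using DFunLike.congr_fun hrepr i
  · intro hker
    refine linearIndependent_iff.mpr fun l hl => ?_
    set t := Finsupp.linearCombination (WittVector p R) b
      (l.mapRange (teichmuller p) (teichmuller_zero p))
    have ht : t.coeff 0 = 0 := by
      rw [coeff_zero_linearCombination]
      convert hl
      ext i
      simp
    ext i
    simpa [t] using (b.mem_ideal_smul_top_iff _ t).mp (hker t ht) i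

theorem linearIndependent_frobenius {v : I → WittVector p S}
    (hv : LinearIndependent (WittVector p R) v) :
    LinearIndependent (WittVector p R) fun i => frobenius (v i) := by
  refine linearIndependent_iff.mpr fun l hl => ?_
  have hV := linearIndependent_iff.mp hv _ <| by
    rw [← verschiebung_linearCombination_frobenius, hl, map_zero]
  refine Finsupp.ext fun i => (_root_.map_eq_zero_iff _ (verschiebung_injective p R)).mp ?_
  simpa using DFunLike.congr_fun hV i

theorem span_frobenius_eq_top (b : Module.Basis I (WittVector p R) (WittVector p S))
    (hker : ∀ x : WittVector p S, x.coeff 0 = 0 →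
      x ∈ verschiebungIdeal p R • (⊤ : Submodule (WittVector p R) (WittVector p S))) :
    Submodule.span (WittVector p R) (Set.range fun i => frobenius (b i)) = ⊤ := by
  rw [eq_top_iff, ← b.span_eq, Submodule.span_le]
  rintro _ ⟨i, rfl⟩
  have hrepr := (b.mem_ideal_smul_top_iff _ _).mp (hker _ (verschiebung_coeff_zero (b i)))
  set l := (b.repr (verschiebung (b i))).mapRange (shift · 1) (zero_shift 1)
  have hl : l.mapRange verschiebung (map_zero _) = b.repr (verschiebung (b i)) := by
    refine Finsupp.ext fun j => ?_
    simpa [l] using verschiebung_shift_one (hrepr j)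
  have hbi : b i = Finsupp.linearCombination (WittVector p R) (fun i => frobenius (b i)) l := by
    apply verschiebung_injective
    rw [verschiebung_linearCombination_frobenius, hl, b.linearCombination_repr]
  rw [hbi, SetLike.mem_coe, ← Finsupp.range_linearCombination]
  exact LinearMap.mem_range_self _ _

end WittVector

section RelativeFrobenius

variable {p : ℕ} [Fact p.Prime] {R S : Type*} [CommRing R] [CommRing S] [Algebra R S]
  [CharP R p] [CharP S p]

theorem relativeFrobenius_tmul (x : S) (r : FrobTwist p R) :
    relativeFrobenius p R S (x ⊗ₜ r) = x ^ p * algebraMap R S r.val :=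
  TensorProduct.liftAddHom_tmul _ _ _ _

theorem relativeFrobenius_bijective_of_basis {I : Type*} (b : Module.Basis I R S)
    (hli : LinearIndependent R fun i => b i ^ p)
    (hspan : Submodule.span R (Set.range fun i => b i ^ p) = ⊤) :
    Function.Bijective (relativeFrobenius p R S) := by
  classical
  let e := TensorProduct.equivFinsuppOfBasisLeft (N := FrobTwist p R) b
  -- `FrobTwist p R` is `R` as a type, so both sides are maps out of `I →₀ R`.
  have hcomp : ⇑(relativeFrobenius p R S) ∘ ⇑e.symm =
      ⇑(Finsupp.linearCombination R fun i => b i ^ p) := by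
    funext l
    rw [Function.comp_apply, TensorProduct.equivFinsuppOfBasisLeft_symm_apply, map_finsuppSum]
    refine (Finsupp.sum_congr fun i _ => ?_).trans (Finsupp.linearCombination_apply R l).symm
    rw [relativeFrobenius_tmul, mul_comm]
    exact (Algebra.smul_def _ _).symm
  have hbij : Function.Bijective (Finsupp.linearCombination R fun i => b i ^ p) :=
    ⟨hli, LinearMap.range_eq_top.mp (by rw [Finsupp.range_linearCombination, hspan])⟩
  exact (Function.Bijective.of_comp_iff _ e.symm.bijective).mp (hcomp ▸ hbij)

end RelativeFrobenius

/-- if a family `(s i)` in `W(S̄)` is a basis of `W(S̄)` as a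
`W(R̄)`-module, and the zeroth coordinates `(s i).coeff 0` are `R̄`-linearly
independent, then `S̄` is relatively perfect over `R̄` and the zeroth coordinates form
an `R̄`-basis of `S̄`. -/
theorem wittBasis_relativelyPerfect (p : ℕ) [Fact p.Prime] (R S : Type*)
    [CommRing R] [CommRing S] [Algebra R S] [CharP R p] [CharP S p]
    {I : Type*} (s : I → WittVector p S)
    (hli : LinearIndependent (WittVector p R) s)
    (hgen : Submodule.span (WittVector p R) (Set.range s) = ⊤)
    (hli0 : LinearIndependent R (fun i => (s i).coeff 0)) :
    Function.Bijective (relativeFrobenius p R S) ∧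
      Submodule.span R (Set.range fun i => (s i).coeff 0) = ⊤ := by
  let b := Module.Basis.mk hli hgen.ge
  have hb : ⇑b = s := Module.Basis.coe_mk _ _
  have hker := (linearIndependent_coeff_zero_iff b).mp (hb ▸ hli0)
  let c := Module.Basis.mk (linearIndependent_frobenius b.linearIndependent)
    (span_frobenius_eq_top b hker).ge
  have hc : (fun i => (c i).coeff 0) = fun i => (s i).coeff 0 ^ p := by
    ext i
    rw [Module.Basis.coe_mk, coeff_frobenius_charP, hb]
  have hspan := span_coeff_zero_eq_top hgen
  refine ⟨relativeFrobenius_bijective_of_basis (Module.Basis.mk hli0 hspan.ge) ?_ ?_, hspan⟩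
  · simpa only [Module.Basis.coe_mk, ← hc] using (linearIndependent_coeff_zero_iff c).mpr hker
  · simpa only [Module.Basis.coe_mk, ← hc] using span_coeff_zero_eq_top c.span_eq
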